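/- arXiv:2006.13115 — 3 statements merged into one kernel-verified Lean document; each statement's English description precedes it below -/
import Mathlib

section
/- The series ∑_{k=1}^∞ (1/k²) · C(2k,k) / 4^k equals ζ(2) − 2·(ln 2)². -/
open scoped BigOperators
open Real

noncomputable def cb (k : ℕ) : ℝ := (Nat.choose (2*k) k : ℝ) / 4^k

noncomputable def H (k : ℕ) : ℝ := ∑ j ∈ Finset.range k, (1:ℝ)/(j+1)

noncomputable def oh (k : ℕ) : ℝ := ∑ j ∈ Finset.range k, (1:ℝ)/(2*j+1)

/-!
Put `F_j(x) = ∑ C(2k,k) / (4^k k^j) x^k` and substitute `x = 4t(1-t)`, `0 ≤ t ≤ 1/2`, which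
removes the square roots: `1 - x = (1-2t)²`. The recursion of the central binomial coefficients
gives the ODE `2(1-x) F_0' = F_0`, whence `F_0 = 1/(1-2t)`; the Euler operator lowers the index,
`x F_1' = F_0 - 1` and `x F_2' = F_1`, so integrating in `t` gives `F_1 = -2 log(1-t)` and
`F_2 = 2 Li₂(t) - log²(1-t)`. Both sides of the last identity are continuous up to `t = 1/2`,
i.e. `x = 1`, and Euler's reflection formula `Li₂(t) + Li₂(1-t) + log t log(1-t) = ζ(2)` at
`t = 1/2` yields `Li₂(1/2) = π²/12 - log² 2 / 2`.
-/

open Filter Topology Set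

theorem cb_zero : cb 0 = 1 := by simp [cb]

theorem cb_nonneg (k : ℕ) : 0 ≤ cb k := by unfold cb; positivity

theorem cb_le_one (k : ℕ) : cb k ≤ 1 := by
  rw [cb, div_le_one (by positivity), ← Nat.centralBinom_eq_two_mul_choose]
  exact_mod_cast Nat.centralBinom_le_four_pow k

theorem two_mul_succ_mul_cb_succ (k : ℕ) : 2 * (k + 1) * cb (k + 1) = (2 * k + 1) * cb k := by
  have h : ((k + 1 : ℕ) : ℝ) * (k + 1).centralBinom = 2 * (2 * k + 1) * k.centralBinom := by
    exact_mod_cast Nat.succ_mul_centralBinom_succ k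
  simp only [cb, ← Nat.centralBinom_eq_two_mul_choose, pow_succ]
  push_cast at h
  field_simp
  linear_combination 2 * h

section PowerSeries

variable {a : ℕ → ℝ} {C x : ℝ}

theorem summable_mul_pow_of_abs_le (ha : ∀ k, |a k| ≤ C) (hx : |x| < 1) :
    Summable fun k => a k * x ^ k := by
  refine .of_norm_bounded ((summable_geometric_of_lt_one (abs_nonneg x) hx).mul_left C)
    fun k => ?_
  rw [norm_mul, norm_pow, Real.norm_eq_abs, Real.norm_eq_abs]
  exact mul_le_mul_of_nonneg_right (ha k) (by positivity)

theorem summable_natCast_mul_mul_pow_of_abs_le (ha : ∀ k, |a k| ≤ C) (hx : |x| < 1) :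
    Summable fun k => k * a k * x ^ k := by
  have h := summable_pow_mul_geometric_of_norm_lt_one 1 (by rwa [norm_abs_eq_norm] : ‖|x|‖ < 1)
  refine .of_norm_bounded (h.mul_left C) fun k => ?_
  rw [norm_mul, norm_mul, norm_pow, Real.norm_eq_abs, Real.norm_eq_abs, Real.norm_eq_abs,
    Nat.abs_cast, pow_one, mul_comm C, mul_right_comm]
  exact mul_le_mul_of_nonneg_left (ha k) (by positivity)

theorem hasDerivAt_tsum_mul_pow (ha : ∀ k, |a k| ≤ C) (hx : |x| < 1) :
    HasDerivAt (fun y => ∑' k, a k * y ^ k) (∑' k, (k + 1) * a (k + 1) * x ^ k) x := by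
  obtain ⟨r, hxr, hr1⟩ := exists_between hx
  have hr : 0 < r := (abs_nonneg x).trans_lt hxr
  have hu : Summable fun k : ℕ => C / r * (k * r ^ k) := by
    have h := summable_pow_mul_geometric_of_norm_lt_one 1 (by rwa [Real.norm_of_nonneg hr.le])
    simpa only [pow_one] using h.mul_left (C / r)
  have hbound : ∀ (k : ℕ) (y : ℝ), |y| ≤ r →
      ‖a k * (k * y ^ (k - 1))‖ ≤ C / r * (k * r ^ k) := by
    intro k y hy
    rw [norm_mul, norm_mul, norm_pow, Real.norm_eq_abs, Real.norm_eq_abs, Real.norm_eq_abs,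
      Nat.abs_cast]
    rcases k with _ | k
    · simp
    · calc |a (k + 1)| * ((k + 1 : ℕ) * |y| ^ k) ≤ C * ((k + 1 : ℕ) * r ^ k) := by
            gcongr
            exacts [(abs_nonneg _).trans (ha 0), ha _]
        _ = C / r * ((k + 1 : ℕ) * r ^ (k + 1)) := by field_simp; ring
  have hderiv := hasDerivAt_tsum_of_isPreconnected hu Metric.isOpen_ball
    (convex_ball (0 : ℝ) r).isPreconnected (fun k y _ => (hasDerivAt_pow k y).const_mul (a k))
    (fun k y hy => hbound k y (by simpa using (mem_ball_zero_iff.1 hy).le))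
    (Metric.mem_ball_self hr) (summable_mul_pow_of_abs_le ha (by simp)) (by simpa using hxr)
  refine hderiv.congr_deriv ?_
  rw [(hu.of_norm_bounded fun k => hbound k x hxr.le).tsum_eq_zero_add]
  simp only [CharP.cast_eq_zero, zero_mul, mul_zero, zero_add, Nat.cast_succ,
    add_tsub_cancel_right]
  exact tsum_congr fun k => by ring

theorem mul_deriv_tsum_mul_pow (ha : ∀ k, |a k| ≤ C) (hx : |x| < 1) :
    x * deriv (fun y => ∑' k, a k * y ^ k) x = ∑' k, k * a k * x ^ k := by
  rw [(hasDerivAt_tsum_mul_pow ha hx).deriv,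
    (summable_natCast_mul_mul_pow_of_abs_le ha hx).tsum_eq_zero_add, ← tsum_mul_left]
  simp only [CharP.cast_eq_zero, zero_mul, zero_add, Nat.cast_succ, pow_succ]
  exact tsum_congr fun k => by ring

theorem continuousOn_tsum_mul_pow (ha : Summable fun k => |a k|) :
    ContinuousOn (fun y => ∑' k, a k * y ^ k) (Icc (-1) 1) := by
  refine continuousOn_tsum (fun k => by fun_prop) ha fun k y hy => ?_
  rw [norm_mul, norm_pow, Real.norm_eq_abs, Real.norm_eq_abs]
  exact mul_le_of_le_one_right (abs_nonneg _) (pow_le_one₀ (abs_nonneg y) (abs_le.2 hy))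

theorem tsum_mul_zero_pow (a : ℕ → ℝ) : ∑' k, a k * (0 : ℝ) ^ k = a 0 := by
  rw [tsum_eq_single 0 fun k hk => by simp [hk]]
  simp

end PowerSeries

theorem eq_of_hasDerivAt_eq {f g f' : ℝ → ℝ} {a b : ℝ} (hab : a ≤ b)
    (hf : ContinuousOn f (Icc a b)) (hg : ContinuousOn g (Icc a b))
    (hf' : ∀ x ∈ Ioo a b, HasDerivAt f (f' x) x)
    (hg' : ∀ x ∈ Ioo a b, HasDerivAt g (f' x) x)
    (hfg : f a = g a) : f b = g b := by
  rcases hab.eq_or_lt with rfl | hab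
  · exact hfg
  obtain ⟨c, -, hc⟩ := exists_hasDerivAt_eq_slope (fun x => f x - g x) (fun _ => 0) hab
    (hf.sub hg) fun x hx => ((hf' x hx).fun_sub (hg' x hx)).congr_deriv (sub_self _)
  rw [eq_comm, div_eq_zero_iff, sub_eq_zero] at hc
  rcases hc with hc | hc <;> linarith

-- At `k = 0` the junk value `0⁻¹ = 0` kills the constant term, except for `j = 0`.
noncomputable def cbSeries (j : ℕ) (x : ℝ) : ℝ := ∑' k : ℕ, cb k / (k : ℝ) ^ j * x ^ k

noncomputable def dilog (y : ℝ) : ℝ := ∑' k : ℕ, ((k : ℝ) ^ 2)⁻¹ * y ^ k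

theorem abs_cb_div_pow_le_one (j k : ℕ) : |cb k / (k : ℝ) ^ j| ≤ 1 := by
  rw [abs_of_nonneg (by have := cb_nonneg k; positivity)]
  rcases k with _ | k
  · rcases j with _ | j <;> simp [cb_zero]
  · exact div_le_one_of_le₀ ((cb_le_one _).trans (one_le_pow₀ (by simp))) (by positivity)

theorem summable_abs_cb_div_sq : Summable fun k : ℕ => |cb k / (k : ℝ) ^ 2| :=
  (Real.summable_nat_pow_inv.2 one_lt_two).of_nonneg_of_le (fun _ => abs_nonneg _) fun k => by
    rw [abs_of_nonneg (by have := cb_nonneg k; positivity), div_eq_mul_inv]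
    exact mul_le_of_le_one_left (by positivity) (cb_le_one k)

theorem abs_inv_natCast_sq_le_one (k : ℕ) : |((k : ℝ) ^ 2)⁻¹| ≤ 1 := by
  rw [abs_of_nonneg (by positivity)]
  rcases k with _ | k
  · simp
  · exact inv_le_one_of_one_le₀ (one_le_pow₀ (by simp))

theorem differentiableAt_cbSeries (j : ℕ) {x : ℝ} (hx : |x| < 1) :
    DifferentiableAt ℝ (cbSeries j) x :=
  (hasDerivAt_tsum_mul_pow (abs_cb_div_pow_le_one j) hx).differentiableAt

theorem differentiableAt_dilog {y : ℝ} (hy : |y| < 1) : DifferentiableAt ℝ dilog y :=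
  (hasDerivAt_tsum_mul_pow abs_inv_natCast_sq_le_one hy).differentiableAt

theorem two_mul_one_sub_mul_deriv_cbSeries_zero {x : ℝ} (hx : |x| < 1) :
    2 * (1 - x) * deriv (cbSeries 0) x = cbSeries 0 x := by
  have ha := abs_cb_div_pow_le_one 0
  have hD : deriv (cbSeries 0) x = _ := (hasDerivAt_tsum_mul_pow ha hx).deriv
  have hE : x * deriv (cbSeries 0) x = _ := mul_deriv_tsum_mul_pow ha hx
  have h2D : 2 * deriv (cbSeries 0) x = 2 * (x * deriv (cbSeries 0) x) + cbSeries 0 x := by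
    rw [hE, hD, cbSeries, ← tsum_mul_left, ← tsum_mul_left,
      ← ((summable_natCast_mul_mul_pow_of_abs_le ha hx).mul_left 2).tsum_add
        (summable_mul_pow_of_abs_le ha hx)]
    refine tsum_congr fun k => ?_
    simp only [pow_zero, div_one, Nat.cast_succ]
    linear_combination x ^ k * two_mul_succ_mul_cb_succ k
  linear_combination h2D

theorem mul_deriv_cbSeries_one {x : ℝ} (hx : |x| < 1) :
    x * deriv (cbSeries 1) x = cbSeries 0 x - 1 := by
  have ha := abs_cb_div_pow_le_one 1
  have hE : x * deriv (cbSeries 1) x = _ := mul_deriv_tsum_mul_pow ha hx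
  rw [hE, cbSeries, (summable_natCast_mul_mul_pow_of_abs_le ha hx).tsum_eq_zero_add,
    (summable_mul_pow_of_abs_le (abs_cb_div_pow_le_one 0) hx).tsum_eq_zero_add]
  simp only [CharP.cast_eq_zero, zero_mul, zero_add, pow_zero, div_one, cb_zero, mul_one,
    add_sub_cancel_left]
  refine tsum_congr fun k => ?_
  field_simp

theorem mul_deriv_cbSeries_two {x : ℝ} (hx : |x| < 1) :
    x * deriv (cbSeries 2) x = cbSeries 1 x := by
  have hE : x * deriv (cbSeries 2) x = _ := mul_deriv_tsum_mul_pow (abs_cb_div_pow_le_one 2) hx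
  rw [hE, cbSeries]
  refine tsum_congr fun k => ?_
  rcases k with _ | k
  · simp
  · field_simp

theorem mul_deriv_dilog {y : ℝ} (hy : |y| < 1) : y * deriv dilog y = -log (1 - y) := by
  have hE : y * deriv dilog y = _ := mul_deriv_tsum_mul_pow abs_inv_natCast_sq_le_one hy
  rw [hE]
  refine ((hasSum_nat_add_iff' 1).mp ?_).tsum_eq
  simp only [Finset.range_one, Finset.sum_singleton, CharP.cast_eq_zero, zero_mul, sub_zero]
  refine (hasSum_pow_div_log_of_abs_lt_one hy).congr_fun fun k => ?_
  push_cast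
  field_simp

theorem abs_four_mul_mul_one_sub_lt_one {t : ℝ} (ht : t ∈ Ico 0 (1 / 2)) :
    |4 * t * (1 - t)| < 1 := by
  obtain ⟨ht0, ht1⟩ := ht
  rw [abs_lt]
  constructor <;> nlinarith

theorem hasDerivAt_cbSeries_four_mul_mul_one_sub (j : ℕ) {t : ℝ} (ht : t ∈ Ico 0 (1 / 2)) :
    HasDerivAt (fun s => cbSeries j (4 * s * (1 - s)))
      (deriv (cbSeries j) (4 * t * (1 - t)) * (4 - 8 * t)) t := by
  have hq : HasDerivAt (fun s : ℝ => 4 * s * (1 - s)) (4 - 8 * t) t := by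
    have := ((hasDerivAt_id' t).const_mul 4).mul ((hasDerivAt_id' t).const_sub 1)
    exact this.congr_deriv (by ring)
  exact (differentiableAt_cbSeries j (abs_four_mul_mul_one_sub_lt_one ht)).hasDerivAt.comp t hq

theorem cbSeries_zero_four_mul_mul_one_sub {t : ℝ} (ht : t ∈ Ico 0 (1 / 2)) :
    cbSeries 0 (4 * t * (1 - t)) = (1 - 2 * t)⁻¹ := by
  have hderiv : ∀ s ∈ Ico (0 : ℝ) (1 / 2),
      HasDerivAt (fun s => (1 - 2 * s) * cbSeries 0 (4 * s * (1 - s))) 0 s := by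
    intro s hs
    have hODE := two_mul_one_sub_mul_deriv_cbSeries_zero (abs_four_mul_mul_one_sub_lt_one hs)
    refine (((hasDerivAt_id' s).const_mul 2).const_sub 1 |>.mul
      (hasDerivAt_cbSeries_four_mul_mul_one_sub 0 hs)).congr_deriv ?_
    linear_combination 2 * hODE
  have hmem : Icc 0 t ⊆ Ico (0 : ℝ) (1 / 2) := Icc_subset_Ico_right ht.2
  have h := eq_of_hasDerivAt_eq ht.1
    (fun s hs => (hderiv s (hmem hs)).continuousAt.continuousWithinAt) continuousOn_const
    (fun s hs => hderiv s (hmem (Ioo_subset_Icc_self hs))) (fun s _ => hasDerivAt_const s 1)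
    (by simp [cbSeries, tsum_mul_zero_pow, cb_zero])
  exact eq_inv_of_mul_eq_one_right h

theorem hasDerivAt_neg_two_mul_log_one_sub {s : ℝ} (hs : s < 1) :
    HasDerivAt (fun s => -2 * log (1 - s)) (2 / (1 - s)) s :=
  (((hasDerivAt_id' s).const_sub 1).log (by linarith)).const_mul (-2) |>.congr_deriv (by ring)

theorem cbSeries_one_four_mul_mul_one_sub {t : ℝ} (ht : t ∈ Ico 0 (1 / 2)) :
    cbSeries 1 (4 * t * (1 - t)) = -2 * log (1 - t) := by
  have hmem : Icc 0 t ⊆ Ico (0 : ℝ) (1 / 2) := Icc_subset_Ico_right ht.2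
  have hlt : ∀ s ∈ Icc 0 t, s < 1 := fun s hs => by linarith [(hmem hs).2]
  refine eq_of_hasDerivAt_eq ht.1
    (fun s hs =>
      (hasDerivAt_cbSeries_four_mul_mul_one_sub 1 (hmem hs)).continuousAt.continuousWithinAt)
    (fun s hs => (hasDerivAt_neg_two_mul_log_one_sub (hlt s hs)).continuousAt.continuousWithinAt)
    (fun s hs => ?_)
    (fun s hs => hasDerivAt_neg_two_mul_log_one_sub (hlt s (Ioo_subset_Icc_self hs)))
    (by simp [cbSeries, tsum_mul_zero_pow])
  have hs' := hmem (Ioo_subset_Icc_self hs)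
  have hE := mul_deriv_cbSeries_one (abs_four_mul_mul_one_sub_lt_one hs')
  rw [cbSeries_zero_four_mul_mul_one_sub hs'] at hE
  refine (hasDerivAt_cbSeries_four_mul_mul_one_sub 1 hs').congr_deriv ?_
  have h0 : s ≠ 0 := hs.1.ne'
  have h1 : 1 - s ≠ 0 := by linarith [hs'.2]
  have h2 : 1 - 2 * s ≠ 0 := by linarith [hs'.2]
  rw [eq_div_iff h1]
  refine mul_left_cancel₀ h0 ?_
  linear_combination (1 - 2 * s) * hE + mul_inv_cancel₀ h2

theorem continuousOn_dilog : ContinuousOn dilog (Icc (-1) 1) :=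
  continuousOn_tsum_mul_pow (by simp)

theorem dilog_zero : dilog 0 = 0 := by simp [dilog, tsum_mul_zero_pow]

theorem dilog_one : dilog 1 = π ^ 2 / 6 := by
  simpa [dilog, one_div] using hasSum_zeta_two.tsum_eq

theorem hasDerivAt_dilog {y : ℝ} (hy : |y| < 1) (hy0 : y ≠ 0) :
    HasDerivAt dilog (-log (1 - y) / y) y := by
  have h : deriv dilog y = -log (1 - y) / y :=
    eq_div_of_mul_eq hy0 (by rw [mul_comm]; exact mul_deriv_dilog hy)
  exact h ▸ (differentiableAt_dilog hy).hasDerivAt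

theorem cbSeries_two_four_mul_mul_one_sub {t : ℝ} (ht : t ∈ Icc 0 (1 / 2)) :
    cbSeries 2 (4 * t * (1 - t)) = 2 * dilog t - log (1 - t) ^ 2 := by
  have hsub : Icc 0 t ⊆ Icc (0 : ℝ) (1 / 2) := Icc_subset_Icc_right ht.2
  refine eq_of_hasDerivAt_eq (f := fun s => cbSeries 2 (4 * s * (1 - s)))
    (g := fun s => 2 * dilog s - log (1 - s) ^ 2)
    (f' := fun s => 2 * (log (1 - s) / (1 - s) - log (1 - s) / s)) ht.1
    ?_ ?_ (fun s hs => ?_) (fun s hs => ?_) (by simp [cbSeries, tsum_mul_zero_pow, dilog_zero])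
  · refine (continuousOn_tsum_mul_pow summable_abs_cb_div_sq).comp (by fun_prop) fun s hs => ?_
    obtain ⟨hs0, hs1⟩ := hsub hs
    constructor <;> nlinarith
  · refine (continuousOn_const.mul (continuousOn_dilog.mono fun s hs => ?_)).sub
      ((((continuous_sub_left 1).continuousOn).log fun s hs => ?_).pow 2)
    · obtain ⟨hs0, hs1⟩ := hsub hs
      constructor <;> linarith
    · linarith [(hsub hs).2]
  · have hs' : s ∈ Ico (0 : ℝ) (1 / 2) := ⟨hs.1.le, hs.2.trans_le ht.2⟩
    have hq : 4 * s * (1 - s) ≠ 0 := by nlinarith [hs'.2, hs.1]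
    have hE := mul_deriv_cbSeries_two (abs_four_mul_mul_one_sub_lt_one hs')
    rw [cbSeries_one_four_mul_mul_one_sub hs', mul_comm] at hE
    refine (hasDerivAt_cbSeries_four_mul_mul_one_sub 2 hs').congr_deriv ?_
    have h0 : s ≠ 0 := hs.1.ne'
    have h1 : 1 - s ≠ 0 := by linarith [hs'.2]
    rw [eq_div_of_mul_eq hq hE]
    field_simp
    ring
  · have hs0 : 0 < s := hs.1
    have hs1 : s < 1 / 2 := hs.2.trans_le ht.2
    have h1 : 1 - s ≠ 0 := by linarith
    have hL := hasDerivAt_dilog (by rw [abs_lt]; constructor <;> linarith) hs0.ne'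
    refine ((hL.const_mul 2).sub ((((hasDerivAt_id' s).const_sub 1).log h1).pow 2)).congr_deriv ?_
    field_simp
    ring

theorem tendsto_log_mul_log_one_sub_zero :
    Tendsto (fun y => log y * log (1 - y)) (𝓝 0) (𝓝 0) := by
  have hbound : ∀ᶠ y in 𝓝 (0 : ℝ), ‖log y * log (1 - y)‖ ≤ 2 * |y * log y| := by
    filter_upwards [eventually_abs_sub_lt 0 (by norm_num : (0 : ℝ) < 1 / 2)] with y hy
    rw [sub_zero] at hy
    have h := Real.abs_log_sub_add_sum_range_le (hy.trans (by norm_num)) 0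
    simp only [Finset.range_zero, Finset.sum_empty, zero_add, pow_one] at h
    have h2 : |log (1 - y)| ≤ 2 * |y| :=
      h.trans (by rw [div_le_iff₀ (by linarith)]; nlinarith [abs_nonneg y])
    rw [Real.norm_eq_abs, abs_mul, abs_mul]
    calc |log y| * |log (1 - y)| ≤ |log y| * (2 * |y|) := by gcongr
      _ = 2 * (|y| * |log y|) := by ring
  have hlim : Tendsto (fun y : ℝ => 2 * |y * log y|) (𝓝 0) (𝓝 0) := by
    simpa using ((continuous_mul_log.abs).tendsto (0 : ℝ)).const_mul 2
  exact squeeze_zero_norm' hbound hlim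

theorem dilog_add_dilog_one_sub {y : ℝ} (hy : y ∈ Icc 0 1) :
    dilog y + dilog (1 - y) + log y * log (1 - y) = π ^ 2 / 6 := by
  rcases hy.2.eq_or_lt with rfl | hy1
  · simp [dilog_one, dilog_zero]
  refine eq_of_hasDerivAt_eq (f := fun s => dilog s + dilog (1 - s) + log s * log (1 - s))
    (f' := fun _ => 0) hy.1 ?_ continuousOn_const (fun s hs => ?_)
    (fun s _ => hasDerivAt_const s _) (by simp [dilog_one, dilog_zero])
  · refine ((continuousOn_dilog.mono fun s hs => ?_).add
      (continuousOn_dilog.comp (continuous_sub_left 1).continuousOn fun s hs => ?_)).add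
      fun s hs => ContinuousAt.continuousWithinAt ?_
    · exact ⟨by linarith [hs.1], by linarith [hs.2]⟩
    · exact ⟨by linarith [hs.2], by linarith [hs.1]⟩
    · rcases hs.1.eq_or_lt with rfl | hs0
      · simpa [ContinuousAt] using tendsto_log_mul_log_one_sub_zero
      · exact (continuousAt_log hs0.ne').mul
          ((continuous_sub_left 1).continuousAt.log (by linarith [hs.2]))
  · obtain ⟨hs0, hs1⟩ : 0 < s ∧ s < 1 := ⟨hs.1, hs.2.trans hy1⟩
    have h1 : 1 - s ≠ 0 := by linarith
    have hneg := (hasDerivAt_id' s).const_sub 1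
    have hL := hasDerivAt_dilog (by rw [abs_lt]; constructor <;> linarith) hs0.ne'
    have hL' := (hasDerivAt_dilog (by rw [abs_lt]; constructor <;> linarith) h1).comp s hneg
    refine ((hL.add hL').add ((hasDerivAt_log hs0.ne').mul (hneg.log h1))).congr_deriv ?_
    rw [sub_sub_cancel]
    field_simp
    ring

theorem stmt_1 :
    ((∑' k : ℕ, (1/((k:ℝ)+1)^2) * cb (k+1) : ℝ) : ℂ)
      = riemannZeta 2 - 2 * (Real.log 2)^2 := by
  have hsum : ∑' k : ℕ, (1 / ((k : ℝ) + 1) ^ 2) * cb (k + 1) = cbSeries 2 1 := by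
    simp only [cbSeries, one_pow, mul_one]
    rw [summable_abs_cb_div_sq.of_abs.tsum_eq_zero_add]
    simp only [CharP.cast_eq_zero, ne_eq, OfNat.ofNat_ne_zero, not_false_eq_true, zero_pow,
      div_zero, zero_add, Nat.cast_succ]
    exact tsum_congr fun k => by ring
  have hH := cbSeries_two_four_mul_mul_one_sub (t := 1 / 2) ⟨by norm_num, le_rfl⟩
  have hrefl := dilog_add_dilog_one_sub (y := 1 / 2) ⟨by norm_num, by norm_num⟩
  norm_num at hH hrefl
  rw [one_div, Real.log_inv] at hH hrefl
  have hval :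
      ∑' k : ℕ, (1 / ((k : ℝ) + 1) ^ 2) * cb (k + 1) = π ^ 2 / 6 - 2 * log 2 ^ 2 := by
    rw [hsum, hH]
    linear_combination hrefl
  rw [hval, riemannZeta_two]
  push_cast
  ring
end

section
/- The series ∑_{k=1}^∞ (1/(2k+1)) · C(2k,k)/4^k equals π/2 − 1. -/
/-!
Since `cb k = Ring.choose (k - 1/2) k`, the binomial series gives `∑ cb k x^k = (1 - x)^(-1/2)`
for `|x| < 1`. Putting `x = sin² θ` and multiplying by `cos θ` gives `∑ cb k sin^(2k) θ cos θ = 1`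
on `(-π/2, π/2)`. The terms are nonnegative on `[0, π/2]`, so the series may be integrated
termwise there, and `∫₀^{π/2} sin^(2k) θ cos θ dθ = 1/(2k+1)` yields `∑ cb k / (2k+1) = π/2`.
Dropping the term `k = 0`, which equals `1`, gives the theorem.
-/

open scoped BigOperators
open Real

open MeasureTheory

theorem succ_mul_cb_succ (n : ℕ) : ((n : ℝ) + 1) * cb (n + 1) = (n + 1 / 2) * cb n := by
  have h : ((n : ℝ) + 1) * (n + 1).centralBinom = 2 * (2 * n + 1) * n.centralBinom := by
    exact_mod_cast Nat.succ_mul_centralBinom_succ n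
  simp only [cb, ← Nat.centralBinom_eq_two_mul_choose, pow_succ]
  field_simp
  linear_combination 2 * h

theorem cb_eq_ringChoose (n : ℕ) : cb n = Ring.choose ((n : ℝ) - 1 / 2) n := by
  induction n with
  | zero => simp [cb]
  | succ n ih =>
    have h := Ring.choose_smul_choose ((n : ℝ) + 1 / 2) (Nat.le_add_left 1 n)
    rw [Nat.choose_one_right, Ring.choose_one_right, Nat.add_sub_cancel, nsmul_eq_mul,
      show (n : ℝ) + 1 / 2 - (1 : ℕ) = n - 1 / 2 by push_cast; ring, ← ih,
      ← succ_mul_cb_succ] at h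
    push_cast at h ⊢
    rw [show (n : ℝ) + 1 - 1 / 2 = n + 1 / 2 by ring]
    exact (mul_left_cancel₀ (by positivity) h).symm

theorem hasSum_cb_mul_pow {x : ℝ} (hx : |x| < 1) :
    HasSum (fun k => cb k * x ^ k) (1 / √(1 - x)) := by
  have h := (one_div_one_sub_rpow_hasFPowerSeriesOnBall_zero (1 / 2)).hasSum (y := x)
    (by simpa [enorm_eq_nnnorm, ← NNReal.coe_lt_one] using hx)
  have hcoeff (k : ℕ) : Ring.choose ((1 / 2 : ℝ) + k - 1) k = cb k := by
    rw [cb_eq_ringChoose]; congr 1; ring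
  simpa only [FormalMultilinearSeries.ofScalars_apply_eq, zero_add, smul_eq_mul, hcoeff,
    mul_comm, sqrt_eq_rpow] using h

theorem integral_sin_pow_two_mul_mul_cos (k : ℕ) :
    ∫ θ in (0)..(π / 2), sin θ ^ (2 * k) * cos θ = 1 / (2 * k + 1) := by
  simpa using integral_sin_pow_mul_cos_pow_odd (a := 0) (b := π / 2) (2 * k) 0

theorem hasSum_cb_mul_sin_pow_mul_cos {θ : ℝ} (hθ : θ ∈ Set.Ioo (-(π / 2)) (π / 2)) :
    HasSum (fun k => cb k * (sin θ ^ (2 * k) * cos θ)) 1 := by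
  have hcos : 0 < cos θ := cos_pos_of_mem_Ioo hθ
  have hsin : |sin θ ^ 2| < 1 := by
    rw [abs_of_nonneg (sq_nonneg _), sin_sq]; linarith [pow_pos hcos 2]
  have h := (hasSum_cb_mul_pow hsin).mul_right (cos θ)
  rw [← cos_sq', sqrt_sq hcos.le, one_div_mul_cancel hcos.ne'] at h
  simpa only [pow_mul, mul_assoc] using h

theorem hasSum_cb_div_two_mul_add_one :
    HasSum (fun k => cb k / (2 * k + 1)) (π / 2) := by
  set F : ℕ → ℝ → ℝ := fun k θ => cb k * (sin θ ^ (2 * k) * cos θ)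
  have hpi : 0 ≤ π / 2 := by positivity
  -- the endpoint `π / 2`, where every term vanishes, is a null set
  have hIoo : ∀ᵐ θ, θ ∈ Set.uIoc 0 (π / 2) → θ ∈ Set.Ioo (-(π / 2)) (π / 2) := by
    filter_upwards [(Set.countable_singleton (π / 2)).ae_notMem volume] with θ hne hθ
    rw [Set.uIoc_of_le hpi] at hθ
    exact ⟨by linarith [hθ.1], lt_of_le_of_ne hθ.2 hne⟩
  have hF_nonneg (k : ℕ) {θ : ℝ} (hθ : θ ∈ Set.Ioo (-(π / 2)) (π / 2)) : 0 ≤ F k θ :=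
    mul_nonneg (by unfold cb; positivity)
      (mul_nonneg ((even_two_mul k).pow_nonneg _) (cos_pos_of_mem_Ioo hθ).le)
  -- each term dominates itself, and the dominating series sums to `1`
  have hsum := intervalIntegral.hasSum_integral_of_dominated_convergence (f := fun _ => 1) F
    (fun k => by fun_prop)
    (fun k => hIoo.mono fun θ hθ h => (norm_of_nonneg (hF_nonneg k (hθ h))).le)
    (hIoo.mono fun θ hθ h => (hasSum_cb_mul_sin_pow_mul_cos (hθ h)).summable)
    (intervalIntegrable_const.congr_uIoo fun θ hθ => by
      rw [Set.uIoo_of_le hpi] at hθ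
      exact (hasSum_cb_mul_sin_pow_mul_cos ⟨by linarith [hθ.1], hθ.2⟩).tsum_eq.symm)
    (hIoo.mono fun θ hθ h => hasSum_cb_mul_sin_pow_mul_cos (hθ h))
  have hint (k : ℕ) : ∫ θ in (0)..(π / 2), F k θ = cb k / (2 * k + 1) := by
    rw [intervalIntegral.integral_const_mul, integral_sin_pow_two_mul_mul_cos, mul_one_div]
  simpa only [hint, intervalIntegral.integral_const, sub_zero, smul_eq_mul, mul_one] using hsum

theorem stmt_7 : ∑' k : ℕ, (1/(2*((k:ℝ)+1)+1)) * cb (k+1) = Real.pi/2 - 1 := by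
  have h := (hasSum_nat_add_iff' 1).mpr hasSum_cb_div_two_mul_add_one
  simp only [Finset.sum_range_one, Nat.cast_zero, mul_zero, zero_add, div_one] at h
  rw [show cb 0 = 1 by simp [cb]] at h
  refine Eq.trans (tsum_congr fun k => ?_) h.tsum_eq
  push_cast
  ring
end

section
/- The series ∑_{k=1}^∞ h_k²/k² equals (45/16)·ζ(4), where h_k = ∑_{j=1}^k 1/(2j−1). -/
open scoped BigOperators
open Real

/-!
Let `f : ℤ → ℝ≥0∞` be `f n = 1 / (2n + 1)` for `n ≥ 0` and `0` for `n < 0`, and write `h = oh`.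
By partial fractions the self-convolution of `f` is `(f * f) k = h (k + 1) / (k + 1)`, and the
autocorrelation `c d = ∑ₚ f p f (p + d)` is even, telescopes to `h d / (2d)` for `d ≥ 1`, and has
`c 0 = ∑ 1 / (2p + 1)² = π² / 8`. Both `∑ₖ (f * f) k²` and `∑_d (c d)²` equal the additive energy
`∑_{a + b = c + e} f a f b f c f e`, hence the series `S` satisfies `S = (π² / 8)² + 2 · S / 4`,
i.e. `S = π⁴ / 32 = (45 / 16) ζ(4)`. Working in `ℝ≥0∞` makes the reorderings free; the
cancellation needs `S < ∞`, which follows from `h n ≤ 1 + log n`.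
-/

open Filter Topology Finset
open scoped ENNReal

lemma ENNReal.sq_tsum {ι : Type*} (u : ι → ℝ≥0∞) : (∑' i, u i) ^ 2 = ∑' i, ∑' j, u i * u j := by
  rw [sq, ← ENNReal.tsum_mul_right]
  simp_rw [← ENNReal.tsum_mul_left]

section
variable {G : Type*} [AddCommGroup G]

noncomputable def selfConv (f : G → ℝ≥0∞) (k : G) : ℝ≥0∞ := ∑' m, f m * f (k - m)

noncomputable def autocorr (f : G → ℝ≥0∞) (d : G) : ℝ≥0∞ := ∑' p, f p * f (p + d)

noncomputable def additiveEnergy (f : G → ℝ≥0∞) : ℝ≥0∞ :=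
  ∑' c, ∑' a, ∑' b, f a * f b * f c * f (a + b - c)

variable (f : G → ℝ≥0∞)

lemma autocorr_neg (d : G) : autocorr f (-d) = autocorr f d := by
  rw [autocorr, autocorr, ← (Equiv.addRight d).tsum_eq]
  refine tsum_congr fun p ↦ ?_
  simp only [Equiv.coe_addRight, add_neg_cancel_right, mul_comm]

lemma tsum_sq_selfConv_eq_additiveEnergy : ∑' k, selfConv f k ^ 2 = additiveEnergy f := by
  simp_rw [selfConv, ENNReal.sq_tsum]
  calc ∑' k, ∑' m, ∑' p, f m * f (k - m) * (f p * f (k - p))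
      = ∑' k, ∑' m, ∑' p, f m * f (k - m) * f p * f (m + (k - m) - p) := by
        simp only [add_sub_cancel, mul_assoc]
    _ = ∑' m, ∑' k, ∑' p, f m * f (k - m) * f p * f (m + (k - m) - p) := ENNReal.tsum_comm
    _ = ∑' a, ∑' b, ∑' c, f a * f b * f c * f (a + b - c) := tsum_congr fun m ↦
        (Equiv.subRight m).tsum_eq fun b ↦ ∑' p, f m * f b * f p * f (m + b - p)
    _ = ∑' a, ∑' c, ∑' b, f a * f b * f c * f (a + b - c) :=
        tsum_congr fun _ ↦ ENNReal.tsum_comm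
    _ = _ := ENNReal.tsum_comm

lemma tsum_sq_autocorr_eq_additiveEnergy : ∑' d, autocorr f d ^ 2 = additiveEnergy f := by
  simp_rw [autocorr, ENNReal.sq_tsum]
  calc ∑' d, ∑' c, ∑' b, f c * f (c + d) * (f b * f (b + d))
      = ∑' d, ∑' c, ∑' b, f (c + d) * f b * f c * f ((c + d) + b - c) := by
        refine tsum_congr fun d ↦ tsum_congr fun c ↦ tsum_congr fun b ↦ ?_
        rw [add_assoc, add_sub_cancel_left, add_comm d b]; ring
    _ = ∑' c, ∑' d, ∑' b, f (c + d) * f b * f c * f ((c + d) + b - c) := ENNReal.tsum_comm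
    _ = _ := tsum_congr fun c ↦
        (Equiv.addLeft c).tsum_eq fun a ↦ ∑' b, f a * f b * f c * f (a + b - c)

theorem tsum_sq_selfConv_eq_tsum_sq_autocorr :
    ∑' k, selfConv f k ^ 2 = ∑' d, autocorr f d ^ 2 := by
  rw [tsum_sq_selfConv_eq_additiveEnergy, tsum_sq_autocorr_eq_additiveEnergy]

end

lemma sum_one_div_odd_mul_odd_sub (k : ℕ) :
    ∑ m ∈ range (k + 1), 1 / ((2 * m + 1) * (2 * ((k : ℝ) - m) + 1)) = oh (k + 1) / (k + 1) := by
  have hreflect : ∑ m ∈ range (k + 1), 1 / (2 * ((k : ℝ) - m) + 1) = oh (k + 1) := by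
    rw [oh, ← sum_range_reflect (fun j : ℕ ↦ 1 / (2 * (j : ℝ) + 1))]
    refine sum_congr rfl fun m hm ↦ ?_
    rw [Nat.add_sub_cancel, Nat.cast_sub (mem_range_succ_iff.1 hm)]
  have hsplit : ∀ m ∈ range (k + 1), 1 / ((2 * m + 1) * (2 * ((k : ℝ) - m) + 1))
      = 1 / (2 * k + 2) * (1 / (2 * m + 1) + 1 / (2 * ((k : ℝ) - m) + 1)) := by
    intro m hm
    have hmk : (m : ℝ) ≤ k := by exact_mod_cast mem_range_succ_iff.1 hm
    have : (0 : ℝ) < 2 * (k - m) + 1 := by linarith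
    field_simp
    ring
  rw [sum_congr rfl hsplit, ← mul_sum, sum_add_distrib, hreflect, ← oh]
  field_simp
  ring

theorem hasSum_sub_shift_of_antitone {g : ℕ → ℝ} (hg : Antitone g)
    (hlim : Tendsto g atTop (𝓝 0)) (D : ℕ) :
    HasSum (fun p ↦ g p - g (p + D)) (∑ j ∈ range D, g j) := by
  have partial_sum (N : ℕ) :
      ∑ p ∈ range N, (g p - g (p + D)) = ∑ j ∈ range D, g j - ∑ j ∈ range D, g (N + j) := by
    induction N with
    | zero => simp
    | succ N ih =>
      have shift := (sum_range_succ' (fun j ↦ g (N + j)) D).symm.trans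
        (sum_range_succ (fun j ↦ g (N + j)) D)
      simp only [← add_assoc, add_zero] at shift
      rw [sum_range_succ, ih]
      simp only [add_right_comm N 1]
      linarith
  rw [hasSum_iff_tendsto_nat_of_nonneg fun p ↦ sub_nonneg.2 (hg (p.le_add_right D))]
  simp only [partial_sum]
  have htail : Tendsto (fun N ↦ ∑ j ∈ range D, g (N + j)) atTop (𝓝 0) := by
    simpa using tendsto_finsetSum (range D) fun j _ ↦ (tendsto_add_atTop_iff_nat j).2 hlim
  simpa using tendsto_const_nhds.sub htail

lemma hasSum_one_div_odd_mul_odd_add (D : ℕ) (hD : D ≠ 0) :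
    HasSum (fun p : ℕ ↦ 1 / ((2 * p + 1) * (2 * p + 2 * D + 1) : ℝ)) (oh D / (2 * D)) := by
  have hanti : Antitone fun p : ℕ ↦ 1 / (2 * p + 1 : ℝ) := fun a b hab ↦ by dsimp only; gcongr
  have hlim : Tendsto (fun p : ℕ ↦ 1 / (2 * p + 1 : ℝ)) atTop (𝓝 0) := by
    simp only [one_div]
    exact tendsto_inv_atTop_zero.comp <| tendsto_atTop_add_const_right _ 1 <|
      tendsto_natCast_atTop_atTop.const_mul_atTop two_pos
  have hD' : (D : ℝ) ≠ 0 := by exact_mod_cast hD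
  have hsum := (hasSum_sub_shift_of_antitone hanti hlim D).mul_left (1 / (2 * D : ℝ))
  rw [← oh, one_div_mul_eq_div] at hsum
  refine hsum.congr_fun fun p ↦ ?_
  push_cast
  field_simp
  ring

theorem hasSum_one_div_odd_sq : HasSum (fun p : ℕ ↦ 1 / (2 * p + 1 : ℝ) ^ 2) (π ^ 2 / 8) := by
  have heven : HasSum (fun n ↦ 1 / ((2 * n : ℕ) : ℝ) ^ 2) (π ^ 2 / 24) := by
    have := hasSum_zeta_two.mul_left (1 / 4)
    rw [show 1 / 4 * (π ^ 2 / 6) = π ^ 2 / 24 by ring] at this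
    refine this.congr_fun fun n ↦ ?_
    push_cast
    ring
  have hinj : Function.Injective (fun n : ℕ ↦ 2 * n + 1) := fun a b h ↦ by simpa using h
  obtain ⟨b, hodd⟩ : Summable fun n : ℕ ↦ 1 / ((2 * n + 1 : ℕ) : ℝ) ^ 2 :=
    hasSum_zeta_two.summable.comp_injective hinj
  have hb : b = π ^ 2 / 8 := by
    have := HasSum.even_add_odd (f := fun n : ℕ ↦ 1 / (n : ℝ) ^ 2) heven hodd
    linarith [this.unique hasSum_zeta_two]
  subst hb
  refine hodd.congr_fun fun p ↦ ?_
  push_cast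
  rfl

lemma oh_nonneg (n : ℕ) : 0 ≤ oh n := by
  unfold oh; positivity

lemma oh_le_harmonic (n : ℕ) : oh n ≤ harmonic n := by
  rw [oh, harmonic]
  push_cast
  gcongr with j
  rw [one_div]
  gcongr
  linarith

lemma oh_le_five_mul_rpow (n : ℕ) (hn : n ≠ 0) : oh n ≤ 5 * (n : ℝ) ^ (1 / 4 : ℝ) := by
  have hn1 : (1 : ℝ) ≤ n := by exact_mod_cast Nat.one_le_iff_ne_zero.2 hn
  have hpow : 1 ≤ (n : ℝ) ^ (1 / 4 : ℝ) := Real.one_le_rpow hn1 (by norm_num)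
  calc oh n ≤ harmonic n := oh_le_harmonic n
    _ ≤ 1 + Real.log n := harmonic_le_one_add_log n
    _ ≤ 1 + (n : ℝ) ^ (1 / 4 : ℝ) / (1 / 4) := by
      gcongr; exact Real.log_le_rpow_div (by positivity) (by norm_num)
    _ ≤ 5 * (n : ℝ) ^ (1 / 4 : ℝ) := by linarith

theorem summable_oh_sq_div_sq : Summable fun k : ℕ ↦ oh (k + 1) ^ 2 / ((k : ℝ) + 1) ^ 2 := by
  have hmaj : Summable fun k : ℕ ↦ 25 * ((k + 1 : ℕ) : ℝ) ^ (-3 / 2 : ℝ) :=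
    ((summable_nat_add_iff 1).2 (Real.summable_nat_rpow.2 (by norm_num))).mul_left 25
  refine hmaj.of_nonneg_of_le (fun k ↦ by positivity) fun k ↦ ?_
  have hx : (0 : ℝ) < k + 1 := by positivity
  have hoh := oh_le_five_mul_rpow (k + 1) k.succ_ne_zero
  push_cast at hoh ⊢
  rw [div_le_iff₀ (by positivity)]
  calc oh (k + 1) ^ 2 ≤ (5 * ((k : ℝ) + 1) ^ (1 / 4 : ℝ)) ^ 2 := by
        gcongr
        exact oh_nonneg _
    _ = 25 * (((k : ℝ) + 1) ^ (1 / 4 : ℝ)) ^ (2 : ℕ) := by ring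
    _ = 25 * ((k : ℝ) + 1) ^ (1 / 2 : ℝ) := by
        rw [← Real.rpow_natCast, ← Real.rpow_mul hx.le]; norm_num
    _ = 25 * ((k : ℝ) + 1) ^ (-3 / 2 : ℝ) * ((k : ℝ) + 1) ^ 2 := by
        rw [mul_assoc, ← Real.rpow_natCast _ 2, ← Real.rpow_add hx]; norm_num

noncomputable def oddRecip (z : ℤ) : ℝ≥0∞ :=
  if 0 ≤ z then ENNReal.ofReal (1 / (2 * z + 1)) else 0

lemma oddRecip_of_neg {z : ℤ} (hz : z < 0) : oddRecip z = 0 := if_neg hz.not_ge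

lemma oddRecip_natCast (n : ℕ) : oddRecip n = ENNReal.ofReal (1 / (2 * n + 1)) := by
  simp [oddRecip]

lemma oddRecip_natCast_sub_natCast {k m : ℕ} (h : m ≤ k) :
    oddRecip (k - m) = ENNReal.ofReal (1 / (2 * ((k : ℝ) - m) + 1)) := by
  rw [← Nat.cast_sub h, oddRecip_natCast, Nat.cast_sub h]

lemma oddRecip_natCast_add_natCast (n d : ℕ) :
    oddRecip (n + d) = ENNReal.ofReal (1 / (2 * n + 2 * d + 1)) := by
  rw [← Nat.cast_add, oddRecip_natCast]; push_cast; ring_nf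

lemma oddRecip_neg_natCast_sub_one (n : ℕ) : oddRecip (-(n + 1)) = 0 :=
  oddRecip_of_neg (by omega)

lemma selfConv_oddRecip_of_neg {k : ℤ} (hk : k < 0) : selfConv oddRecip k = 0 := by
  refine ENNReal.tsum_eq_zero.2 fun m ↦ ?_
  rcases lt_or_ge m 0 with hm | hm
  · rw [oddRecip_of_neg hm, zero_mul]
  · rw [oddRecip_of_neg (show k - m < 0 by omega), mul_zero]

lemma selfConv_oddRecip_natCast (k : ℕ) :
    selfConv oddRecip k = ENNReal.ofReal (oh (k + 1) / (k + 1)) := by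
  rw [selfConv, tsum_of_nat_of_neg_add_one ENNReal.summable ENNReal.summable]
  simp only [oddRecip_neg_natCast_sub_one, zero_mul, tsum_zero, add_zero]
  have hsupp (n : ℕ) (hn : n ∉ range (k + 1)) : oddRecip n * oddRecip (k - n) = 0 := by
    rw [oddRecip_of_neg (z := k - n) (by rw [mem_range] at hn; omega), mul_zero]
  have hterm (m : ℕ) (hm : m ∈ range (k + 1)) :
      0 ≤ 1 / ((2 * m + 1) * (2 * ((k : ℝ) - m) + 1)) := by
    have : (m : ℝ) ≤ k := by exact_mod_cast mem_range_succ_iff.1 hm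
    have : (0 : ℝ) ≤ 2 * (k - m) + 1 := by linarith
    positivity
  rw [tsum_eq_sum hsupp, ← sum_one_div_odd_mul_odd_sub, ENNReal.ofReal_sum_of_nonneg hterm]
  refine sum_congr rfl fun m hm ↦ ?_
  rw [oddRecip_natCast, oddRecip_natCast_sub_natCast (mem_range_succ_iff.1 hm),
    ← ENNReal.ofReal_mul (by positivity), one_div_mul_one_div]

lemma autocorr_oddRecip_natCast_of_hasSum {d : ℕ} {c : ℝ}
    (h : HasSum (fun n : ℕ ↦ 1 / ((2 * n + 1) * (2 * n + 2 * d + 1) : ℝ)) c) :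
    autocorr oddRecip d = ENNReal.ofReal c := by
  rw [autocorr, tsum_of_nat_of_neg_add_one ENNReal.summable ENNReal.summable]
  simp only [oddRecip_neg_natCast_sub_one, zero_mul, tsum_zero, add_zero]
  have hterm (n : ℕ) : oddRecip n * oddRecip (n + d)
      = ENNReal.ofReal (1 / ((2 * n + 1) * (2 * n + 2 * d + 1))) := by
    rw [oddRecip_natCast, oddRecip_natCast_add_natCast, ← ENNReal.ofReal_mul (by positivity),
      one_div_mul_one_div]
  rw [tsum_congr hterm, ← ENNReal.ofReal_tsum_of_nonneg (fun n ↦ by positivity) h.summable,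
    h.tsum_eq]

lemma autocorr_oddRecip_zero : autocorr oddRecip 0 = ENNReal.ofReal (π ^ 2 / 8) :=
  autocorr_oddRecip_natCast_of_hasSum (d := 0) <| by simpa [sq] using hasSum_one_div_odd_sq

lemma autocorr_oddRecip_natCast_add_one (d : ℕ) :
    autocorr oddRecip (d + 1) = ENNReal.ofReal (oh (d + 1) / (d + 1) / 2) := by
  have h := hasSum_one_div_odd_mul_odd_add (d + 1) d.succ_ne_zero
  rw [div_div, mul_comm]
  exact_mod_cast autocorr_oddRecip_natCast_of_hasSum (d := d + 1) (by exact_mod_cast h)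

lemma tsum_sq_selfConv_oddRecip :
    ∑' k : ℤ, selfConv oddRecip k ^ 2
      = ENNReal.ofReal (∑' k : ℕ, oh (k + 1) ^ 2 / ((k : ℝ) + 1) ^ 2) := by
  have hnat (n : ℕ) :
      selfConv oddRecip n ^ 2 = ENNReal.ofReal (oh (n + 1) ^ 2 / ((n : ℝ) + 1) ^ 2) := by
    rw [selfConv_oddRecip_natCast, ← div_pow,
      ENNReal.ofReal_pow (div_nonneg (oh_nonneg _) (by positivity))]
  have hneg (n : ℕ) : selfConv oddRecip (-(n + 1)) = 0 := selfConv_oddRecip_of_neg (by omega)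
  rw [tsum_of_nat_of_neg_add_one ENNReal.summable ENNReal.summable]
  simp only [hnat, hneg, zero_pow two_ne_zero, tsum_zero, add_zero]
  exact (ENNReal.ofReal_tsum_of_nonneg (fun n ↦ by positivity) summable_oh_sq_div_sq).symm

lemma tsum_sq_autocorr_oddRecip :
    ∑' d : ℤ, autocorr oddRecip d ^ 2
      = ENNReal.ofReal (π ^ 4 / 64 + (∑' k : ℕ, oh (k + 1) ^ 2 / ((k : ℝ) + 1) ^ 2) / 2) := by
  have hsucc (n : ℕ) : autocorr oddRecip (n + 1) ^ 2
      = ENNReal.ofReal (oh (n + 1) ^ 2 / ((n : ℝ) + 1) ^ 2 / 4) := by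
    have : 0 ≤ oh (n + 1) / (n + 1) / 2 := by have := oh_nonneg (n + 1); positivity
    rw [autocorr_oddRecip_natCast_add_one, ← ENNReal.ofReal_pow this, div_pow, div_pow]
    norm_num
  rw [tsum_of_nat_of_neg_add_one ENNReal.summable ENNReal.summable,
    tsum_eq_zero_add' ENNReal.summable]
  simp only [autocorr_neg, Nat.cast_zero, Nat.cast_add, Nat.cast_one, hsucc,
    autocorr_oddRecip_zero]
  rw [← ENNReal.ofReal_tsum_of_nonneg (fun n ↦ by positivity) (summable_oh_sq_div_sq.div_const 4),
    tsum_div_const, ← ENNReal.ofReal_pow (by positivity), ← ENNReal.ofReal_add (by positivity)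
    (by positivity), ← ENNReal.ofReal_add (by positivity) (by positivity)]
  congr 1
  ring

theorem tsum_oh_sq_div_sq : ∑' k : ℕ, oh (k + 1) ^ 2 / ((k : ℝ) + 1) ^ 2 = π ^ 4 / 32 := by
  have h := tsum_sq_selfConv_oddRecip.symm.trans
    ((tsum_sq_selfConv_eq_tsum_sq_autocorr oddRecip).trans tsum_sq_autocorr_oddRecip)
  have hS : 0 ≤ ∑' k : ℕ, oh (k + 1) ^ 2 / ((k : ℝ) + 1) ^ 2 := tsum_nonneg fun k ↦ by positivity
  rw [ENNReal.ofReal_eq_ofReal_iff hS (by positivity)] at h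
  linarith

theorem stmt_19 :
    ((∑' k : ℕ, (oh (k+1))^2/((k:ℝ)+1)^2 : ℝ) : ℂ)
      = (45/16) * riemannZeta 4 := by
  rw [tsum_oh_sq_div_sq, riemannZeta_four]
  push_cast
  ring
end
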